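/- Let b be odd and let m = m_{1,b} be the minimal infinite smooth word over {1 < b} (satisfying Φ(m) = (1b)^ω), which is an infinite Lyndon word. Then Δ⁻¹₁(m), the word whose run-length encoding is m and which starts with the letter 1, is also an infinite smooth Lyndon word over {1 < b}. -/
import Mathlib

/-- Strict lexicographic order on infinite words. -/
def InfLex {α : Type*} [LT α] (u v : ℕ → α) : Prop :=
  ∃ k, (∀ j < k, u j = v j) ∧ u k < v k

/-- An infinite word is an infinite Lyndon word if it is lexicographically smaller
than all of its proper suffixes. -/
def IsInfLyndon {α : Type*} [LT α] (w : ℕ → α) : Prop :=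
  ∀ i, 0 < i → InfLex w (fun n => w (n + i))

/-- Partial sums of an infinite sequence of block lengths. -/
def psum (u : ℕ → ℕ) : ℕ → ℕ
  | 0 => 0
  | k + 1 => psum u k + u k

/-- The index of the maximal block containing position `n` in the word whose block
lengths are given by `u`. -/
def blockIdx (u : ℕ → ℕ) (n : ℕ) : ℕ :=
  Nat.findGreatest (fun k => psum u k ≤ n) n

/-- `expand x y u` is the infinite word `x^{u 0} y^{u 1} x^{u 2} ⋯` whose run-length
encoding is `u` and whose letters alternate between `x` and `y`, starting with `x`;
i.e. the pseudo-inverse `Δ⁻¹_x(u)` over the alphabet `{x, y}`. -/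
def expand (x y : ℕ) (u : ℕ → ℕ) (n : ℕ) : ℕ :=
  if blockIdx u n % 2 = 0 then x else y

/-- `SmoothChain a b W` says that `W k` is the sequence of iterated run-length
encodings `Δᵏ(W 0)` over the alphabet `{a, b}`: each `W k` is a word over `{a, b}`
and is recovered from its run-length encoding `W (k+1)` by alternating expansion
starting with its own first letter. -/
def SmoothChain (a b : ℕ) (W : ℕ → ℕ → ℕ) : Prop :=
  ∀ k, (∀ n, W k n = a ∨ W k n = b) ∧
    W k = expand (W k 0) (if W k 0 = a then b else a) (W (k + 1))

/-- An infinite word `w` is smooth over `{a, b}` if all its iterated run-length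
encodings `Δᵏ(w)` are infinite words over `{a, b}`. -/
def IsSmooth (a b : ℕ) (w : ℕ → ℕ) : Prop :=
  ∃ W : ℕ → ℕ → ℕ, W 0 = w ∧ SmoothChain a b W

lemma psum_succ (u : ℕ → ℕ) (k : ℕ) : psum u (k+1) = psum u k + u k := rfl

lemma psum_mono (u : ℕ → ℕ) {j k : ℕ} (h : j ≤ k) : psum u j ≤ psum u k := by
  induction h with
  | refl => exact le_rfl
  | step h ih => rw [psum_succ]; omega

lemma le_psum (u : ℕ → ℕ) (hu : ∀ i, 1 ≤ u i) (j : ℕ) : j ≤ psum u j := by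
  induction j with
  | zero => exact Nat.zero_le _
  | succ j ih => have := hu j; rw [psum_succ]; omega

lemma psum_parity (u : ℕ → ℕ) (hu : ∀ i, Odd (u i)) (j : ℕ) : psum u j % 2 = j % 2 := by
  induction j with
  | zero => rfl
  | succ j ih => have := Nat.odd_iff.mp (hu j); rw [psum_succ]; omega

lemma psum_blockIdx_le (u : ℕ → ℕ) (n : ℕ) : psum u (blockIdx u n) ≤ n := by
  simp only [blockIdx]
  rcases Nat.eq_zero_or_pos (Nat.findGreatest (fun k => psum u k ≤ n) n) with h | h
  · rw [h]; exact Nat.zero_le n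
  · exact Nat.findGreatest_of_ne_zero (P := fun k => psum u k ≤ n) rfl (by omega)

lemma lt_psum_blockIdx_succ (u : ℕ → ℕ) (hu : ∀ i, 1 ≤ u i) (n : ℕ) :
    n < psum u (blockIdx u n + 1) := by
  simp only [blockIdx]
  by_contra h
  push_neg at h
  have hge := le_psum u hu (Nat.findGreatest (fun k => psum u k ≤ n) n + 1)
  have hlt : Nat.findGreatest (fun k => psum u k ≤ n) n + 1 ≤ n := le_trans hge h
  exact Nat.findGreatest_is_greatest (P := fun k => psum u k ≤ n)
    (Nat.lt_succ_self _) hlt h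

lemma blockIdx_eq (u : ℕ → ℕ) (hu : ∀ i, 1 ≤ u i) {j n : ℕ}
    (h1 : psum u j ≤ n) (h2 : n < psum u (j+1)) : blockIdx u n = j := by
  have hjn : j ≤ n := le_trans (le_psum u hu j) h1
  have hle : j ≤ blockIdx u n := Nat.le_findGreatest hjn h1
  rcases Nat.lt_or_ge j (blockIdx u n) with h' | h'
  · exfalso
    have h3 := psum_mono u (show j + 1 ≤ blockIdx u n by omega)
    have h4 := psum_blockIdx_le u n
    omega
  · omega

lemma blockIdx_le (u : ℕ → ℕ) (n : ℕ) : blockIdx u n ≤ n := Nat.findGreatest_le n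

lemma expand_apply (x y : ℕ) (u : ℕ → ℕ) (n : ℕ) :
    expand x y u n = if blockIdx u n % 2 = 0 then x else y := rfl

lemma blockIdx_zero (u : ℕ → ℕ) : blockIdx u 0 = 0 := rfl

/-- Let `m = m_{1,b}` be the minimal infinite smooth word over `{1 < b}` with `b`
odd (so `Φ(m) = (1b)^ω` and `m` is an infinite Lyndon word).  Then `Δ⁻¹₁(m)`, the
word whose run-length encoding is `m` and which starts with letter `1`, is also an
infinite smooth Lyndon word over `{1 < b}`. -/
theorem dinv_of_minimal_smooth_is_lyndon (b : ℕ) (hb : Odd b) (h1b : 1 < b)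
    (m : ℕ → ℕ) (hs : IsSmooth 1 b m)
    (hmin : ∀ w, IsSmooth 1 b w → ¬ InfLex w m)
    (hPhi : ∀ W : ℕ → ℕ → ℕ, W 0 = m → SmoothChain 1 b W →
      ∀ k, W k 0 = if k % 2 = 0 then 1 else b)
    (hLyn : IsInfLyndon m) :
    IsSmooth 1 b (expand 1 b m) ∧ IsInfLyndon (expand 1 b m) := by
  obtain ⟨W, hW0, hWc⟩ := hs
  have hphi := hPhi W hW0 hWc
  have hlet : ∀ k n, W k n = 1 ∨ W k n = b := fun k => (hWc k).1
  have hposW : ∀ k i, 1 ≤ W k i := by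
    intro k i; rcases hlet k i with h | h <;> omega
  have hoddW : ∀ k i, Odd (W k i) := by
    intro k i
    rcases hlet k i with h | h
    · rw [h]; exact odd_one
    · rw [h]; exact hb
  -- the expansion formula for W k in terms of block parities
  have hWe : ∀ k n, W k n = if blockIdx (W (k+1)) n % 2 = k % 2 then 1 else b := by
    intro k n
    have h2 := congrFun (hWc k).2 n
    rcases Nat.even_or_odd k with hk | hk
    · have hk0 : k % 2 = 0 := Nat.even_iff.mp hk
      have h0 : W k 0 = 1 := by rw [hphi k, if_pos hk0]
      rw [h2, h0, if_pos rfl, expand_apply, hk0]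
    · have hk1 : k % 2 = 1 := Nat.odd_iff.mp hk
      have h0 : W k 0 = b := by rw [hphi k]; simp [hk1]
      rw [h2, h0, if_neg (by omega), expand_apply, hk1]
      rcases Nat.mod_two_eq_zero_or_one (blockIdx (W (k+1)) n) with h | h <;>
        simp [h] <;> omega
  -- Key structural claim: letters at positions of the "wrong" parity are 1.
  have C : ∀ n k, (n + k) % 2 = 0 → W k n = 1 := by
    intro n
    induction n using Nat.strong_induction_on with
    | _ n IH =>
      intro k hnk
      have hb1 : psum (W (k+1)) (blockIdx (W (k+1)) n) ≤ n := psum_blockIdx_le _ n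
      have hb2 : n < psum (W (k+1)) (blockIdx (W (k+1)) n + 1) :=
        lt_psum_blockIdx_succ _ (hposW (k+1)) n
      have hb3 : blockIdx (W (k+1)) n ≤ n := blockIdx_le _ n
      have hpar : psum (W (k+1)) (blockIdx (W (k+1)) n) % 2 = blockIdx (W (k+1)) n % 2 :=
        psum_parity _ (hoddW (k+1)) _
      have hge : blockIdx (W (k+1)) n ≤ psum (W (k+1)) (blockIdx (W (k+1)) n) :=
        le_psum _ (hposW (k+1)) _
      have hjk : blockIdx (W (k+1)) n % 2 = k % 2 := by
        by_contra hne
        rcases eq_or_lt_of_le hb3 with he | hlt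
        · omega
        · have h1 : W (k+1) (blockIdx (W (k+1)) n) = 1 := IH _ hlt (k+1) (by omega)
          have h2 : psum (W (k+1)) (blockIdx (W (k+1)) n + 1)
              = psum (W (k+1)) (blockIdx (W (k+1)) n) + W (k+1) (blockIdx (W (k+1)) n) :=
            psum_succ _ _
          omega
      rw [hWe k n, if_pos hjk]
  have hm1b : ∀ n, m n = 1 ∨ m n = b := by rw [← hW0]; exact hlet 0
  have hQ0 : ∀ n, n % 2 = 0 → m n = 1 := by
    intro n hn; rw [← hW0]; exact C n 0 (by omega)
  have hmpos : ∀ i, 1 ≤ m i := by rw [← hW0]; exact hposW 0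
  have hmodd : ∀ i, Odd (m i) := by rw [← hW0]; exact hoddW 0
  constructor
  · -- smoothness
    refine ⟨fun k => match k with | 0 => expand 1 b m | (k+1) => W k, rfl, ?_⟩
    intro k
    match k with
    | 0 =>
      constructor
      · intro n
        show expand 1 b m n = 1 ∨ expand 1 b m n = b
        rw [expand_apply]
        split
        · exact Or.inl rfl
        · exact Or.inr rfl
      · have hv0 : expand 1 b m 0 = 1 := rfl
        show expand 1 b m
            = expand (expand 1 b m 0) (if expand 1 b m 0 = 1 then b else 1) (W 0)
        rw [hv0, if_pos rfl, hW0]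
    | (k+1) => exact hWc k
  · -- Lyndon
    intro i hi
    rcases Nat.mod_two_eq_zero_or_one (blockIdx m i) with hvi | hvi
    · -- suffix starts with 1, at the beginning of an even block j0
      set j0 := blockIdx m i with hj0
      have hmj0 : m j0 = 1 := hQ0 j0 hvi
      have hb1 : psum m j0 ≤ i := psum_blockIdx_le m i
      have hb2 : i < psum m (j0 + 1) := lt_psum_blockIdx_succ m hmpos i
      have hi0 : i = psum m j0 := by
        have := psum_succ m j0; omega
      have hj0pos : 0 < j0 := by
        rcases Nat.eq_zero_or_pos j0 with h | h
        · exfalso; rw [h] at hi0; simp [psum] at hi0; omega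
        · exact h
      obtain ⟨r, hag0, hlt0⟩ := hLyn j0 hj0pos
      have hag : ∀ l < r, m l = m (l + j0) := hag0
      have hlt : m r < m (r + j0) := hlt0
      have hr1 : m r = 1 ∧ m (r + j0) = b := by
        rcases hm1b r with h | h <;> rcases hm1b (r + j0) with h' | h' <;> omega
      have hrodd : r % 2 = 1 := by
        by_contra h
        have hre : (r + j0) % 2 = 0 := by omega
        have := hQ0 (r + j0) hre
        omega
      -- the partial sums shift by i up to index r
      have hshift : ∀ l, l ≤ r → psum m (l + j0) = psum m l + i := by
        intro l hl
        induction l with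
        | zero => rw [Nat.zero_add]; simp [psum]; omega
        | succ l ih =>
          have h1 := ih (by omega)
          have h2 := hag l (by omega)
          have h3 : l + 1 + j0 = (l + j0) + 1 := by omega
          rw [h3, psum_succ, psum_succ]
          omega
      set q := psum m (r + 1) with hq
      have hqe : psum m (r + 1) = psum m r + m r := psum_succ m r
      refine ⟨q, ?_, ?_⟩
      · -- agreement below q
        intro n hn
        have h1 : psum m (blockIdx m n) ≤ n := psum_blockIdx_le m n
        have h2 : n < psum m (blockIdx m n + 1) := lt_psum_blockIdx_succ m hmpos n
        set j := blockIdx m n with hj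
        have hjr : j ≤ r := by
          by_contra h
          push_neg at h
          have := psum_mono m (show r + 1 ≤ j by omega)
          omega
        have e1 : psum m (j + j0) ≤ n + i := by
          rw [hshift j hjr]; omega
        have e2 : n + i < psum m (j + j0 + 1) := by
          rcases eq_or_lt_of_le hjr with he | hlt'
          · -- j = r
            have hA : psum m (r + j0 + 1) = psum m (r + j0) + m (r + j0) := psum_succ m _
            have hB := hshift r le_rfl
            rw [he]
            omega
          · have hB := hshift (j+1) (by omega)
            have h3 : j + 1 + j0 = j + j0 + 1 := by omega
            rw [h3] at hB
            omega
        have hbe : blockIdx m (n + i) = j + j0 := blockIdx_eq m hmpos e1 e2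
        show expand 1 b m n = expand 1 b m (n + i)
        rw [expand_apply, expand_apply, hbe, ← hj]
        have : (j + j0) % 2 = j % 2 := by omega
        rw [this]
      · -- strict inequality at q
        have hq1 : blockIdx m q = r + 1 := by
          refine blockIdx_eq m hmpos le_rfl ?_
          have := psum_succ m (r + 1)
          have := hmpos (r + 1)
          omega
        have hq2 : blockIdx m (q + i) = r + j0 := by
          refine blockIdx_eq m hmpos ?_ ?_
          · rw [hshift r le_rfl]; omega
          · have hA : psum m (r + j0 + 1) = psum m (r + j0) + m (r + j0) := psum_succ m _
            have hB := hshift r le_rfl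
            omega
        show expand 1 b m q < expand 1 b m (q + i)
        rw [expand_apply, expand_apply, hq1, hq2]
        rw [if_pos (by omega), if_neg (by omega)]
        exact h1b
    · -- suffix starts with b
      refine ⟨0, by omega, ?_⟩
      show expand 1 b m 0 < expand 1 b m (0 + i)
      rw [Nat.zero_add, expand_apply, expand_apply, blockIdx_zero]
      rw [if_pos rfl, if_neg (by omega)]
      exact h1b
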